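/- Let H_1 be the graph on n ≥ 5 vertices obtained from a triangle by attaching n − 3 pendant edges to one fixed vertex of the triangle. Then tpc(H_1) = n − 2. -/

import Mathlib

/-- Interleave two lists, starting with the first. -/
def List.interleaveAlt {α : Type*} : List α → List α → List α
  | [], ys => ys
  | x :: xs, ys => x :: List.interleaveAlt ys xs
termination_by xs ys => xs.length + ys.length

namespace SimpleGraph

variable {V : Type*} {α : Type*} {G : SimpleGraph V}

/-- The sequence of colors `cE e₀, cV v₁, cE e₁, cV v₂, …, cE e_{m-1}` of the edges and
internal vertices of a walk, in order. -/
def Walk.totalColorSeq (cV : V → α) (cE : Sym2 V → α) {u v : V} (p : G.Walk u v) : List α :=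
  (p.edges.map cE).interleaveAlt (p.support.tail.dropLast.map cV)

/-- A walk is total-proper if in its color sequence, any two entries at distance 1 or 2
are distinct.  This says exactly that adjacent edges get distinct colors, adjacent internal
vertices get distinct colors, and every internal vertex gets a color distinct from those of
its incident edges on the walk. -/
def Walk.IsTotalProper (cV : V → α) (cE : Sym2 V → α) {u v : V} (p : G.Walk u v) : Prop :=
  ∀ i a b, (p.totalColorSeq cV cE)[i]? = some a →
    ((p.totalColorSeq cV cE)[i + 1]? = some b ∨ (p.totalColorSeq cV cE)[i + 2]? = some b) →
    a ≠ b

/-- A total coloring (given by a vertex coloring `cV` and an edge coloring `cE`) makes `G`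
total-proper connected if every two distinct vertices are joined by a total-proper path. -/
def IsTPCColoring (G : SimpleGraph V) (cV : V → α) (cE : Sym2 V → α) : Prop :=
  ∀ u v : V, u ≠ v → ∃ p : G.Walk u v, p.IsPath ∧ p.IsTotalProper cV cE

/-- The total-proper connection number: the minimum number of colors in a total coloring
making `G` total-proper connected. -/
noncomputable def tpc (G : SimpleGraph V) : ℕ :=
  sInf {k | ∃ (cV : V → Fin k) (cE : Sym2 V → Fin k), G.IsTPCColoring cV cE}

end SimpleGraph

/-- The graph `H₁` on `n` vertices: a triangle on vertices `0, 1, 2` together with `n - 3`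
pendant edges attached to vertex `0`. -/
def graphH1 (n : ℕ) : SimpleGraph (Fin n) :=
  SimpleGraph.fromRel
    (fun a b => (a.val < 3 ∧ b.val < 3) ∨ (a.val = 0 ∧ 3 ≤ b.val))

/-!
Two distinct pendant vertices `b, b'` of `H₁` are joined only by the path `b – 0 – b'`, so in a
total-proper colouring the `n - 3` pendant edges and the hub `0` get pairwise distinct colours,
which needs `n - 2` colours. Conversely, give the hub colour `0`, the pendant edge `0b` colour
`b - 2`, the triangle edges `01, 02, 12` colours `1, 2, 0` and the vertices `1, 2` colours `2, 1`.
Every two vertices are then joined by a total-proper path through the hub, except that `1` and `3`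
(resp. `2` and `4`) must go round the triangle, as `01` and `03` (resp. `02` and `04`) share a
colour.
-/

namespace List

variable {α : Type*}

def DistinctWithinTwo (l : List α) : Prop :=
  ∀ i a b, l[i]? = some a → (l[i + 1]? = some b ∨ l[i + 2]? = some b) → a ≠ b

@[simp]
theorem distinctWithinTwo_singleton (a : α) : [a].DistinctWithinTwo := by
  rintro (_ | i) x y <;> simp

@[simp]
theorem distinctWithinTwo_pair {a b : α} : [a, b].DistinctWithinTwo ↔ a ≠ b := by
  refine ⟨fun h => h 0 a b rfl (.inl rfl), fun hab => ?_⟩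
  rintro (_ | _ | i) x y <;> simp
  rintro rfl rfl
  exact hab

@[simp]
theorem distinctWithinTwo_cons_cons_cons {a b c : α} {l : List α} :
    (a :: b :: c :: l).DistinctWithinTwo ↔ a ≠ b ∧ a ≠ c ∧ (b :: c :: l).DistinctWithinTwo := by
  refine ⟨fun h => ⟨h 0 a b rfl (.inl rfl), h 0 a c rfl (.inr rfl), fun i => h (i + 1)⟩, ?_⟩
  rintro ⟨hab, hac, h⟩ (_ | i) x y
  · simp only [zero_add, getElem?_cons_zero, getElem?_cons_succ, Option.some.injEq]
    rintro rfl (rfl | rfl) <;> assumption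
  · exact h i x y

theorem DistinctWithinTwo.reverse {l : List α} (h : l.DistinctWithinTwo) :
    l.reverse.DistinctWithinTwo := by
  intro i a b ha hb
  have hi : i < l.length := by simpa using (List.getElem?_eq_some_iff.mp ha).1
  obtain ⟨d, hd, hb⟩ : ∃ d, (d = 1 ∨ d = 2) ∧ l.reverse[i + d]? = some b := by
    rcases hb with hb | hb <;> exact ⟨_, by simp, hb⟩
  have hid : i + d < l.length := by simpa using (List.getElem?_eq_some_iff.mp hb).1
  rw [List.getElem?_reverse (by omega)] at ha hb
  refine (h (l.length - 1 - (i + d)) b a hb ?_).symm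
  rcases hd with rfl | rfl
  · exact .inl (by rwa [show l.length - 1 - (i + 1) + 1 = l.length - 1 - i by omega])
  · exact .inr (by rwa [show l.length - 1 - (i + 2) + 2 = l.length - 1 - i by omega])

end List

namespace SimpleGraph.Walk

variable {V α : Type*} {G : SimpleGraph V} (cV : V → α) (cE : Sym2 V → α)

@[simp]
theorem isTotalProper_iff {u v : V} (p : G.Walk u v) :
    p.IsTotalProper cV cE ↔ (p.totalColorSeq cV cE).DistinctWithinTwo :=
  Iff.rfl

@[simp]
theorem totalColorSeq_nil {u : V} : (nil : G.Walk u u).totalColorSeq cV cE = [] := by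
  simp [totalColorSeq, List.interleaveAlt]

@[simp]
theorem totalColorSeq_cons_nil {u v : V} (h : G.Adj u v) :
    (cons h nil).totalColorSeq cV cE = [cE s(u, v)] := by
  simp [totalColorSeq, List.interleaveAlt]

@[simp]
theorem totalColorSeq_cons_cons {u v w x : V} (h : G.Adj u v) (h' : G.Adj v w)
    (p : G.Walk w x) :
    (cons h (cons h' p)).totalColorSeq cV cE =
      cE s(u, v) :: cV v :: (cons h' p).totalColorSeq cV cE := by
  simp [totalColorSeq, List.interleaveAlt, List.dropLast_cons_of_ne_nil, support_ne_nil]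


theorem totalColorSeq_concat {u v w : V} {p : G.Walk u v} (hp : ¬p.Nil) (h : G.Adj v w) :
    (p.concat h).totalColorSeq cV cE = p.totalColorSeq cV cE ++ [cV v, cE s(v, w)] := by
  induction p with
  | nil => exact absurd .nil hp
  | cons h₁ q ih =>
    cases q with
    | nil => simp [concat_cons, concat_nil]
    | cons h₂ r =>
      rw [concat_cons, concat_cons, totalColorSeq_cons_cons, ← concat_cons,
        ih not_nil_cons, totalColorSeq_cons_cons, List.cons_append, List.cons_append]

theorem totalColorSeq_reverse {u v : V} (p : G.Walk u v) :
    p.reverse.totalColorSeq cV cE = (p.totalColorSeq cV cE).reverse := by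
  induction p with
  | nil => simp
  | cons h q ih =>
    cases q with
    | nil => simp [Sym2.eq_swap]
    | cons h' r =>
      rw [reverse_cons, ← concat_eq_append, totalColorSeq_concat _ _ (by simp), ih,
        totalColorSeq_cons_cons]
      simp [Sym2.eq_swap]

theorem IsTotalProper.reverse {u v : V} {p : G.Walk u v} (hp : p.IsTotalProper cV cE) :
    p.reverse.IsTotalProper cV cE := by
  rw [isTotalProper_iff, totalColorSeq_reverse]
  exact List.DistinctWithinTwo.reverse hp

end SimpleGraph.Walk

namespace SimpleGraph

variable {V α : Type*} {G : SimpleGraph V} {cV : V → α} {cE : Sym2 V → α}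

theorem isTPCColoring_of_forall_lt [LinearOrder V]
    (h : ∀ u v : V, u < v → ∃ p : G.Walk u v, p.IsPath ∧ p.IsTotalProper cV cE) :
    G.IsTPCColoring cV cE := by
  intro u v huv
  rcases huv.lt_or_gt with huv | hvu
  · exact h u v huv
  · obtain ⟨p, hp, hpt⟩ := h v u hvu
    exact ⟨p.reverse, hp.reverse, hpt.reverse⟩


theorem Walk.IsPath.eq_cons_cons_nil_of_pendant {b c b' : V} (hb : ∀ x, G.Adj b x ↔ x = c)
    (hb' : ∀ x, G.Adj b' x ↔ x = c) (hne : b ≠ b') {p : G.Walk b b'} (hp : p.IsPath) :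
    ∃ (h : G.Adj b c) (h' : G.Adj c b'), p = .cons h (.cons h' .nil) := by
  obtain _ | ⟨h, q⟩ := p
  · exact absurd rfl hne
  obtain rfl : c = _ := ((hb _).mp h).symm
  obtain _ | ⟨h', r⟩ := q
  · exact absurd ((hb' _).mpr rfl) (G.loopless.irrefl _)
  obtain _ | ⟨h'', r⟩ := r
  · exact ⟨h, h', rfl⟩
  have hc : (cons h'' r).penultimate = c := (hb' _).mp (adj_penultimate not_nil_cons).symm
  exact absurd (hc ▸ getVert_mem_support _ _) (cons_isPath_iff _ _ |>.mp hp.of_cons).2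

theorem IsTPCColoring.ne_of_pendant (hG : G.IsTPCColoring cV cE) {b c b' : V}
    (hb : ∀ x, G.Adj b x ↔ x = c) (hb' : ∀ x, G.Adj b' x ↔ x = c) (hne : b ≠ b') :
    cE s(c, b) ≠ cV c ∧ cE s(c, b) ≠ cE s(c, b') := by
  obtain ⟨p, hp, hpt⟩ := hG b b' hne
  obtain ⟨h, h', rfl⟩ := hp.eq_cons_cons_nil_of_pendant hb hb' hne
  simp_all [Sym2.eq_swap]

theorem IsTPCColoring.card_add_one_le [Fintype α] (hG : G.IsTPCColoring cV cE) {c : V}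
    {L : Finset V} (hL : ∀ b ∈ L, ∀ x, G.Adj b x ↔ x = c) (hL₂ : 2 ≤ L.card) :
    L.card + 1 ≤ Fintype.card α := by
  have hcol (b : L) : cE s(c, b) ≠ cV c := by
    obtain ⟨b', hb', hne⟩ := L.exists_mem_ne hL₂ b
    exact (hG.ne_of_pendant (hL _ b.2) (hL _ hb') hne.symm).1
  have hinj : Function.Injective (fun o : Option L => o.elim (cV c) fun b => cE s(c, b)) := by
    rintro (_ | b) (_ | b') h
    · rfl
    · exact absurd h.symm (hcol b')
    · exact absurd h (hcol b)
    · by_contra hne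
      exact (hG.ne_of_pendant (hL _ b.2) (hL _ b'.2) fun e => hne (by simp [Subtype.ext e])).2 h
  simpa using Fintype.card_le_of_injective _ hinj


theorem exists_isPath_isTotalProper_of_adj_adj {u v w : V} (h₁ : G.Adj u v) (h₂ : G.Adj v w)
    (huw : u ≠ w) (hc : [cE s(u, v), cV v, cE s(v, w)].DistinctWithinTwo) :
    ∃ p : G.Walk u w, p.IsPath ∧ p.IsTotalProper cV cE :=
  ⟨.cons h₁ (.cons h₂ .nil), by simp [h₁.ne, h₂.ne, huw], by simpa using hc⟩

theorem exists_isPath_isTotalProper_of_adj_adj_adj {u v w x : V} (h₁ : G.Adj u v)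
    (h₂ : G.Adj v w) (h₃ : G.Adj w x) (huw : u ≠ w) (hux : u ≠ x) (hvx : v ≠ x)
    (hc : [cE s(u, v), cV v, cE s(v, w), cV w, cE s(w, x)].DistinctWithinTwo) :
    ∃ p : G.Walk u x, p.IsPath ∧ p.IsTotalProper cV cE :=
  ⟨.cons h₁ (.cons h₂ (.cons h₃ .nil)), by simp [h₁.ne, h₂.ne, h₃.ne, huw, hux, hvx],
    by simpa using hc⟩

end SimpleGraph

section GraphH1

open SimpleGraph

theorem graphH1_adj {n : ℕ} {a b : Fin n} : (graphH1 n).Adj a b ↔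
    a ≠ b ∧ (a.val < 3 ∧ b.val < 3 ∨ a.val = 0 ∧ 3 ≤ b.val ∨ b.val = 0 ∧ 3 ≤ a.val) := by
  simp only [graphH1, fromRel_adj]
  tauto

variable (m : ℕ)

def graphH1VertexColor (v : Fin (m + 5)) : Fin (m + 3) :=
  ⟨if v.val = 1 then 2 else if v.val = 2 then 1 else 0, by split_ifs <;> omega⟩

def graphH1EdgeColor : Sym2 (Fin (m + 5)) → Fin (m + 3) :=
  Sym2.lift ⟨fun a b => ⟨if min a.val b.val = 0 then
      (if 3 ≤ max a.val b.val then max a.val b.val - 2 else max a.val b.val) else 0,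
      by split_ifs <;> omega⟩,
    fun a b => by simp only [min_comm, max_comm]⟩

@[simp]
theorem graphH1VertexColor_val (v : Fin (m + 5)) :
    (graphH1VertexColor m v).val = if v.val = 1 then 2 else if v.val = 2 then 1 else 0 :=
  rfl

@[simp]
theorem graphH1EdgeColor_val (a b : Fin (m + 5)) : (graphH1EdgeColor m s(a, b)).val =
    if min a.val b.val = 0 then
      (if 3 ≤ max a.val b.val then max a.val b.val - 2 else max a.val b.val) else 0 :=
  rfl

theorem graphH1_isTPCColoring :
    (graphH1 (m + 5)).IsTPCColoring (graphH1VertexColor m) (graphH1EdgeColor m) := by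
  refine isTPCColoring_of_forall_lt fun u v (huv : u.val < v.val) => ?_
  by_cases hadj : (graphH1 (m + 5)).Adj u v
  · exact ⟨hadj.toWalk, by simp [hadj.ne], by simp⟩
  obtain ⟨hu0, hv⟩ : u.val ≠ 0 ∧ 3 ≤ v.val := by rw [graphH1_adj] at hadj; omega
  rcases (by omega : u.val = 1 ∨ u.val = 2 ∨ 3 ≤ u.val) with hu | hu | hu
  · by_cases hv3 : v.val = 3
    · refine exists_isPath_isTotalProper_of_adj_adj_adj (v := ⟨2, by omega⟩)
        (w := ⟨0, by omega⟩) ?_ ?_ ?_ ?_ ?_ ?_ ?_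
      all_goals simp [graphH1_adj, Fin.ext_iff, -Fin.val_eq_zero_iff, hu, hv3]
    · refine exists_isPath_isTotalProper_of_adj_adj (v := ⟨0, by omega⟩) ?_ ?_ ?_ ?_
      all_goals simp [graphH1_adj, Fin.ext_iff, -Fin.val_eq_zero_iff, hu, hv] <;> omega
  · by_cases hv4 : v.val = 4
    · refine exists_isPath_isTotalProper_of_adj_adj_adj (v := ⟨1, by omega⟩)
        (w := ⟨0, by omega⟩) ?_ ?_ ?_ ?_ ?_ ?_ ?_
      all_goals simp [graphH1_adj, Fin.ext_iff, -Fin.val_eq_zero_iff, hu, hv4]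
    · refine exists_isPath_isTotalProper_of_adj_adj (v := ⟨0, by omega⟩) ?_ ?_ ?_ ?_
      all_goals simp [graphH1_adj, Fin.ext_iff, -Fin.val_eq_zero_iff, hu, hv] <;> omega
  · refine exists_isPath_isTotalProper_of_adj_adj (v := ⟨0, by omega⟩) ?_ ?_ ?_ ?_
    all_goals (simp [graphH1_adj, Fin.ext_iff, -Fin.val_eq_zero_iff, hu, hv]; omega)

theorem graphH1_adj_iff_of_three_le {b : Fin (m + 5)} (hb : 3 ≤ b.val) (x : Fin (m + 5)) :
    (graphH1 (m + 5)).Adj b x ↔ x = 0 := by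
  rw [graphH1_adj, Fin.ext_iff, Fin.val_zero]
  omega

theorem graphH1_card_le {α : Type*} [Fintype α] {cV : Fin (m + 5) → α}
    {cE : Sym2 (Fin (m + 5)) → α} (h : (graphH1 (m + 5)).IsTPCColoring cV cE) :
    m + 3 ≤ Fintype.card α := by
  have := h.card_add_one_le (L := Finset.Ici (⟨3, by omega⟩ : Fin (m + 5)))
    (fun b hb => graphH1_adj_iff_of_three_le m (Fin.le_def.mp (Finset.mem_Ici.mp hb)))
    (by simp)
  simp only [Fin.card_Ici] at this
  omega

end GraphH1

open SimpleGraph in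
theorem tpc_H1 (n : ℕ) (h5 : 5 ≤ n) : (graphH1 n).tpc = n - 2 := by
  obtain ⟨m, rfl⟩ := Nat.exists_eq_add_of_le' h5
  rw [show m + 5 - 2 = m + 3 by omega]
  refine IsLeast.csInf_eq ⟨⟨_, _, graphH1_isTPCColoring m⟩, ?_⟩
  rintro k ⟨cV, cE, hc⟩
  simpa using graphH1_card_le m hc
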